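/- For every h < 8, no h-HAM system near-perfectly assembles the discrete Sierpinski carpet C_∞ with respect to its stage sequence C_0 ⊆ C_1 ⊆ C_2 ⊆ ⋯; that is, at least 8 hands are required for near-perfect assembly of the Sierpinski carpet. -/

import Mathlib

/-- A tile type: one glue (a natural number) per side. Glue 0 is the null glue. -/
structure Tile where
  north : ℕ
  east : ℕ
  south : ℕ
  west : ℕ
deriving DecidableEq

/-- An assembly: a nonempty finite set of positions in ℤ², each carrying a tile.
(The `tile` function is only meaningful on `dom`.) -/
structure Assembly where
  dom : Finset (ℤ × ℤ)
  tile : ℤ × ℤ → Tile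
  nonempty : dom.Nonempty

/-- The translation of an assembly by a vector `v`. -/
def Assembly.translate (A : Assembly) (v : ℤ × ℤ) : Assembly where
  dom := A.dom.image (· + v)
  tile := fun p => A.tile (p - v)
  nonempty := A.nonempty.image _

/-- Interaction strength between a tile `t` at position `p` and a tile `u` at
position `p + d`: the strength of the common glue on the abutting sides if the
glues match, and `0` otherwise (also `0` if the positions are not adjacent). -/
def bondStrength (str : ℕ → ℕ) (t u : Tile) (d : ℤ × ℤ) : ℕ :=
  if d = (1, 0) then (if t.east = u.west then str t.east else 0)
  else if d = (-1, 0) then (if t.west = u.east then str t.west else 0)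
  else if d = (0, 1) then (if t.north = u.south then str t.north else 0)
  else if d = (0, -1) then (if t.south = u.north then str t.south else 0)
  else 0

/-- The total strength of the bonds crossing the cut `(P, Q)` of an assembly. -/
def cutStrength (str : ℕ → ℕ) (A : Assembly) (P Q : Finset (ℤ × ℤ)) : ℕ :=
  ∑ p ∈ P, ∑ q ∈ Q, bondStrength str (A.tile p) (A.tile q) (q - p)

/-- An assembly is `τ`-stable if every partition of its domain into two nonempty
parts is crossed by bonds of total strength at least `τ`. -/
def IsStable (str : ℕ → ℕ) (τ : ℕ) (A : Assembly) : Prop :=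
  ∀ P Q : Finset (ℤ × ℤ), P.Nonempty → Q.Nonempty → Disjoint P Q → P ∪ Q = A.dom →
    τ ≤ cutStrength str A P Q

/-- `Combines L C` : the assemblies in the list `L` have pairwise disjoint domains
and `C` is their union. -/
def Combines (L : List Assembly) (C : Assembly) : Prop :=
  List.Pairwise (fun A B => Disjoint A.dom B.dom) L ∧
  (∀ p ∈ C.dom, ∃ A ∈ L, p ∈ A.dom) ∧
  (∀ A ∈ L, A.dom ⊆ C.dom ∧ ∀ p ∈ A.dom, C.tile p = A.tile p)

/-- Producible assemblies of the `h`-HAM system `(T, τ, h)` (with glue strengths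
`str`): the least set of assemblies containing every single tile of `T` placed at
any position of ℤ², and closed under taking `τ`-stable unions of at most `h`
suitably translated producible assemblies with pairwise disjoint domains. -/
inductive HamProducible (T : Finset Tile) (str : ℕ → ℕ) (τ h : ℕ) : Assembly → Prop
  | single (t : Tile) (ht : t ∈ T) (p : ℤ × ℤ) :
      HamProducible T str τ h ⟨{p}, fun _ => t, Finset.singleton_nonempty p⟩
  | combine (L : List (Assembly × (ℤ × ℤ))) (C : Assembly) :
      L.length ≤ h →
      (∀ x ∈ L, HamProducible T str τ h x.1) →
      Combines (L.map fun x => x.1.translate x.2) C →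
      IsStable str τ C →
      HamProducible T str τ h C

/-- The `h`-HAM system `(T, τ, h)` (finitely) self-assembles the shape `X ⊆ ℤ²`:
every producible assembly `A` admits an infinite sequence of producible
assemblies starting at `A`, each obtained from the previous one as a `τ`-stable
union with at most `h - 1` other (suitably translated) producible assemblies,
whose domains union to exactly a translate of `X`. -/
def SelfAssembles (T : Finset Tile) (str : ℕ → ℕ) (τ h : ℕ) (X : Set (ℤ × ℤ)) : Prop :=
  ∀ A, HamProducible T str τ h A →
    ∃ seq : ℕ → Assembly, seq 0 = A ∧
      (∀ n, HamProducible T str τ h (seq n)) ∧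
      (∀ n, ∃ L : List (Assembly × (ℤ × ℤ)), L.length ≤ h - 1 ∧
        (∀ x ∈ L, HamProducible T str τ h x.1) ∧
        Combines (seq n :: L.map fun x => x.1.translate x.2) (seq (n + 1)) ∧
        IsStable str τ (seq (n + 1))) ∧
      ∃ v : ℤ × ℤ, (⋃ n, ((seq n).dom : Set (ℤ × ℤ))) = (· + v) '' X

/-- The `h`-HAM system `(T, τ, h)` near-perfectly assembles the fractal with
increasing stage sequence `P 0 ⊆ P 1 ⊆ ⋯`: it self-assembles `⋃ i, P i`, and
(1) for some constant `c`, every stage `P i` is matched, up to translation, by a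
producible assembly whose domain is a subset of `P i` missing at most `c` points;
(2) for some constant `c'`, every producible assembly has a translate whose
domain is a subset of some stage `P i` missing at most `c'` points. -/
def NearPerfectlyAssembles (T : Finset Tile) (str : ℕ → ℕ) (τ h : ℕ)
    (P : ℕ → Finset (ℤ × ℤ)) : Prop :=
  SelfAssembles T str τ h (⋃ i, (P i : Set (ℤ × ℤ))) ∧
  (∃ c : ℕ, ∀ i : ℕ, ∃ A, HamProducible T str τ h A ∧ ∃ v : ℤ × ℤ,
      (A.translate v).dom ⊆ P i ∧ (P i \ (A.translate v).dom).card ≤ c) ∧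
  (∃ c' : ℕ, ∀ A, HamProducible T str τ h A → ∃ (v : ℤ × ℤ) (i : ℕ),
      (A.translate v).dom ⊆ P i ∧ (P i \ (A.translate v).dom).card ≤ c')

/-- Stages of the discrete (non-tree) Sierpinski triangle:
`S_0 = {(0,0),(-1,0),(0,1),(-1,1)}` and
`S_{i+1} = S_i ∪ (S_i + 2^i·(1,2)) ∪ (S_i + 2^i·(-1,2))`. -/
def sierpTri : ℕ → Finset (ℤ × ℤ)
  | 0 => {(0, 0), (-1, 0), (0, 1), (-1, 1)}
  | i + 1 =>
      sierpTri i ∪ (sierpTri i).image (· + ((2 : ℤ) ^ i, 2 ^ (i + 1))) ∪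
        (sierpTri i).image (· + (-(2 : ℤ) ^ i, 2 ^ (i + 1)))

/-- The discrete Sierpinski triangle `S_∞ = ⋃ i, S_i`. -/
def sierpTriInf : Set (ℤ × ℤ) := ⋃ i, (sierpTri i : Set (ℤ × ℤ))

/-- The offset set `V` for the Sierpinski carpet. -/
def carpetV : Finset (ℤ × ℤ) := {(1,0), (0,1), (0,2), (2,0), (1,2), (2,1), (2,2)}

/-- Stages of the discrete Sierpinski carpet:
`C_0 = {(0,0)}` and `C_{i+1} = C_i ∪ ⋃_{v ∈ V} (C_i + 3^i·v)`. -/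
def sierpCarpet : ℕ → Finset (ℤ × ℤ)
  | 0 => {(0, 0)}
  | i + 1 =>
      sierpCarpet i ∪ carpetV.biUnion fun v =>
        (sierpCarpet i).image (· + ((3 : ℤ) ^ i * v.1, (3 : ℤ) ^ i * v.2))

/-- The discrete Sierpinski carpet `C_∞ = ⋃ i, C_i`. -/
def sierpCarpetInf : Set (ℤ × ℤ) := ⋃ i, (sierpCarpet i : Set (ℤ × ℤ))

/-- The scale-factor-`c` version of a shape `X ⊆ ℤ²`: each point of `X` becomes a
`c × c` block (membership via floor division of both coordinates by `c`). -/
def scaleShape (c : ℤ) (X : Set (ℤ × ℤ)) : Set (ℤ × ℤ) :=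
  {p | (Int.fdiv p.1 c, Int.fdiv p.2 c) ∈ X}

/-!
A stage `C_i` of the carpet has exactly `8 ^ i` points. If every producible assembly is a stage
missing at most `c'` points, then by induction on producibility every producible assembly has
fewer than `8 ^ (c' + 1) - c'` tiles: each of the at most `7` pieces of a combination is then a
near-copy of a stage of index at most `c'`, so the union has at most `7 · 8 ^ c'` tiles. This
uniform bound contradicts that every stage, however large, is matched up to a constant number
of points.
-/

open Finset

lemma Assembly.card_translate_dom (A : Assembly) (v : ℤ × ℤ) :
    (A.translate v).dom.card = A.dom.card :=
  card_image_of_injective _ (add_left_injective v)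

lemma Combines.card_le_length_mul {L : List Assembly} {C : Assembly} (hC : Combines L C)
    {n : ℕ} (hn : ∀ A ∈ L, A.dom.card ≤ n) : C.dom.card ≤ L.length * n := by
  classical
  calc C.dom.card ≤ (L.toFinset.biUnion Assembly.dom).card := by
        refine card_le_card fun p hp => ?_
        obtain ⟨A, hA, hpA⟩ := hC.2.1 p hp
        exact mem_biUnion.2 ⟨A, List.mem_toFinset.2 hA, hpA⟩
    _ ≤ L.toFinset.card * n := card_biUnion_le_card_mul _ _ _ (by simpa using hn)
    _ ≤ L.length * n := Nat.mul_le_mul_right _ L.toFinset_card_le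

lemma card_le_pow_of_subset_of_card_sdiff_le {α : Type*} [DecidableEq α] {s t : Finset α}
    {b i k c : ℕ} (hb : 1 < b) (ht : t.card = b ^ i) (hst : s ⊆ t) (hc : (t \ s).card ≤ c)
    (hs : s.card + c < b ^ (k + 1)) : s.card ≤ b ^ k := by
  have hlt : b ^ i < b ^ (k + 1) := by
    have := card_le_card_sdiff_add_card (s := t) (t := s)
    omega
  have hik : i ≤ k := Nat.lt_succ_iff.1 ((Nat.pow_lt_pow_iff_right hb).1 hlt)
  calc s.card ≤ t.card := card_le_card hst
    _ = b ^ i := ht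
    _ ≤ b ^ k := Nat.pow_le_pow_right (by omega) hik

lemma HamProducible.card_add_lt_of_forall_near_stage {T : Finset Tile} {str : ℕ → ℕ}
    {τ h : ℕ} {P : ℕ → Finset (ℤ × ℤ)} {b c' : ℕ} (hb : 1 < b) (hP : ∀ i, (P i).card = b ^ i)
    (hh : h < b)
    (near : ∀ A, HamProducible T str τ h A → ∃ (v : ℤ × ℤ) (i : ℕ),
      (A.translate v).dom ⊆ P i ∧ (P i \ (A.translate v).dom).card ≤ c')
    {A : Assembly} (hA : HamProducible T str τ h A) : A.dom.card + c' < b ^ (c' + 1) := by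
  have hc' : c' < b ^ c' := Nat.lt_pow_self hb
  induction hA with
  | single _ _ p =>
    change ({p} : Finset (ℤ × ℤ)).card + c' < _
    have := Nat.pow_lt_pow_right hb (Nat.lt_add_one c')
    rw [card_singleton]
    omega
  | combine L C hlen hprod hcomb _ ih =>
    have hpieces : ∀ B ∈ L.map (fun x => x.1.translate x.2), B.dom.card ≤ b ^ c' := by
      simp only [List.mem_map]
      rintro _ ⟨x, hx, rfl⟩
      obtain ⟨v, i, hsub, hmiss⟩ := near x.1 (hprod x hx)
      have hsmall := ih x hx
      rw [← x.1.card_translate_dom v] at hsmall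
      rw [x.1.card_translate_dom, ← x.1.card_translate_dom v]
      exact card_le_pow_of_subset_of_card_sdiff_le hb (hP i) hsub hmiss hsmall
    have hC := hcomb.card_le_length_mul hpieces
    rw [List.length_map] at hC
    calc C.dom.card + c' < L.length * b ^ c' + b ^ c' := by omega
      _ = (L.length + 1) * b ^ c' := by ring
      _ ≤ b * b ^ c' := Nat.mul_le_mul_right _ (by omega)
      _ = b ^ (c' + 1) := (pow_succ' b c').symm

theorem not_nearPerfectlyAssembles_of_card_eq_pow (T : Finset Tile) (str : ℕ → ℕ) (τ h : ℕ)
    (P : ℕ → Finset (ℤ × ℤ)) (b : ℕ) (hb : 1 < b) (hP : ∀ i, (P i).card = b ^ i) (hh : h < b) :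
    ¬ NearPerfectlyAssembles T str τ h P := by
  rintro ⟨-, ⟨c, hmatch⟩, ⟨c', hnear⟩⟩
  obtain ⟨A, hA, v, hsub, hmiss⟩ := hmatch (c + (c' + 1))
  have hsmall := hA.card_add_lt_of_forall_near_stage hb hP hh hnear
  rw [← A.card_translate_dom v] at hsmall
  have hlarge : b ^ (c + (c' + 1)) ≤ (A.translate v).dom.card + c := by
    have := card_le_card_sdiff_add_card (s := P (c + (c' + 1))) (t := (A.translate v).dom)
    rw [hP] at this
    omega
  have hgap : c + b ^ (c' + 1) ≤ b ^ (c + (c' + 1)) :=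
    calc c + b ^ (c' + 1) ≤ (c + 1) * b ^ (c' + 1) := by
          nlinarith [Nat.one_le_pow (c' + 1) b (by omega)]
      _ ≤ b ^ c * b ^ (c' + 1) := Nat.mul_le_mul_right _ (Nat.lt_pow_self hb)
      _ = b ^ (c + (c' + 1)) := (pow_add b c (c' + 1)).symm
  omega

lemma sierpCarpet_succ_eq_biUnion (i : ℕ) :
    sierpCarpet (i + 1) = (insert 0 carpetV).biUnion fun v =>
      (sierpCarpet i).image (· + ((3 : ℤ) ^ i * v.1, (3 : ℤ) ^ i * v.2)) := by
  rw [biUnion_insert, sierpCarpet]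
  simp [Prod.mk_zero_zero]

lemma bounds_of_mem_sierpCarpet (i : ℕ) :
    ∀ p ∈ sierpCarpet i, 0 ≤ p.1 ∧ p.1 < 3 ^ i ∧ 0 ≤ p.2 ∧ p.2 < 3 ^ i := by
  induction i with
  | zero => simp [sierpCarpet]
  | succ i ih =>
    rw [sierpCarpet_succ_eq_biUnion]
    simp only [mem_biUnion, mem_image]
    rintro _ ⟨v, hv, q, hq, rfl⟩
    have hv : 0 ≤ v.1 ∧ v.1 ≤ 2 ∧ 0 ≤ v.2 ∧ v.2 ≤ 2 := by
      fin_cases hv <;> simp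
    obtain ⟨q1, q2, q3, q4⟩ := ih q hq
    have hpos : (0 : ℤ) < 3 ^ i := by positivity
    simp only [Prod.fst_add, Prod.snd_add, pow_succ]
    refine ⟨by nlinarith, by nlinarith, by nlinarith, by nlinarith⟩

lemma Int.add_mul_ediv_of_nonneg_of_lt {a n : ℤ} (k : ℤ) (ha : 0 ≤ a) (han : a < n) :
    (a + n * k) / n = k := by
  rw [Int.add_mul_ediv_left _ _ (by omega), Int.ediv_eq_zero_of_lt ha han, zero_add]

lemma disjoint_sierpCarpet_translates (i : ℕ) {v w : ℤ × ℤ} (hvw : v ≠ w) :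
    Disjoint ((sierpCarpet i).image (· + ((3 : ℤ) ^ i * v.1, (3 : ℤ) ^ i * v.2)))
      ((sierpCarpet i).image (· + ((3 : ℤ) ^ i * w.1, (3 : ℤ) ^ i * w.2))) := by
  simp only [disjoint_left, mem_image]
  rintro _ ⟨q, hq, rfl⟩ ⟨r, hr, he⟩
  obtain ⟨q1, q2, q3, q4⟩ := bounds_of_mem_sierpCarpet i q hq
  obtain ⟨r1, r2, r3, r4⟩ := bounds_of_mem_sierpCarpet i r hr
  simp only [Prod.ext_iff, Prod.fst_add, Prod.snd_add] at he
  apply hvw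
  ext
  · rw [← Int.add_mul_ediv_of_nonneg_of_lt v.1 q1 q2, ← he.1,
      Int.add_mul_ediv_of_nonneg_of_lt w.1 r1 r2]
  · rw [← Int.add_mul_ediv_of_nonneg_of_lt v.2 q3 q4, ← he.2,
      Int.add_mul_ediv_of_nonneg_of_lt w.2 r3 r4]

theorem card_sierpCarpet (i : ℕ) : (sierpCarpet i).card = 8 ^ i := by
  induction i with
  | zero => rfl
  | succ i ih =>
    rw [sierpCarpet_succ_eq_biUnion,
      card_biUnion fun v _ w _ hvw => disjoint_sierpCarpet_translates i hvw,
      sum_const_nat fun v _ => (card_image_of_injective _ (add_left_injective _)).trans ih]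
    rw [show (insert 0 carpetV).card = 8 from rfl, pow_succ, mul_comm]

/-- For every `h < 8`, no `h`-HAM system near-perfectly
assembles the discrete Sierpinski carpet `C_∞` with respect to its stage
sequence: at least 8 hands are required. -/
theorem sierpinski_carpet_near_perfect_needs_eight_hands :
    ∀ h : ℕ, 0 < h → h < 8 →
      ∀ (T : Finset Tile) (str : ℕ → ℕ) (τ : ℕ),
        str 0 = 0 → 0 < τ →
        ¬ NearPerfectlyAssembles T str τ h sierpCarpet :=
  fun h _ hh T str τ _ _ =>
    not_nearPerfectlyAssembles_of_card_eq_pow T str τ h sierpCarpet 8 (by norm_num)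
      card_sierpCarpet hh
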